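/- arXiv:1310.5801 — 3 statements merged into one kernel-verified Lean document; each statement's English description precedes it below -/
import Mathlib

section
/- Let ω : (0,1] → (0,∞) be an increasing function such that ω(t)/t^{1−ε} is decreasing on (0,1] for some ε > 0. Then there exists a constant C = C(ω) > 0 such that for every complex sequence (a_k)_{k≥0} with |a_k| ≤ ω(2^{-k}) for all k, the Hadamard gap series f(z) = Σ_{k=0}^∞ a_k z^{2^k} defines a holomorphic function on the unit disc B_1 satisfying sup_{z ∈ B_1} |f′(z)|(1−|z|)/ω(1−|z|) ≤ C; in particular f ∈ B^ω(B_1). -/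
/-!
Differentiating termwise, `|f′(z)| ≤ Σ 2^k ω(2^{-k}) r^{2^k-1}` with `r = |z| = 1 - δ`. The two
monotonicity conditions give `ω(2^{-k}) ≤ ω(δ) (1 + (2^{-k}/δ)^{1-s})` for `s = min ε 1`, which
reduces the estimate to the gap sums `Σ (2^s)^k r^{2^k-1} ≤ C(s) δ^{-s}`. For those, cut the sum
at the `m` with `2^m δ ∈ [1, 2]`: below `m` it is dominated by a geometric sum in `2^s`, and above
`m` the factor `r^{2^k}` decays doubly exponentially because `r^{2^m} ≤ e^{-1}`.
-/

open Metric Set Filter Topology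

lemma summable_pow_mul_pow_two_pow_sub_one {q r : ℝ} (hq : 0 ≤ q) (hr0 : 0 ≤ r) (hr1 : r < 1) :
    Summable fun k : ℕ => q ^ k * r ^ (2 ^ k - 1) := by
  refine summable_of_ratio_norm_eventually_le (r := 1 / 2) (by norm_num) ?_
  have hlim : Tendsto (fun k : ℕ => q * r ^ 2 ^ k) atTop (𝓝 0) := by
    simpa using ((tendsto_pow_atTop_nhds_zero_of_lt_one hr0 hr1).comp
      (tendsto_pow_atTop_atTop_of_one_lt (α := ℕ) one_lt_two)).const_mul q
  filter_upwards [hlim.eventually_le_const (by norm_num : (0 : ℝ) < 1 / 2)] with k hk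
  have hexp : 2 ^ (k + 1) - 1 = 2 ^ k + (2 ^ k - 1) := by
    have := Nat.one_le_two_pow (n := k); rw [pow_succ]; omega
  rw [Real.norm_of_nonneg (by positivity), Real.norm_of_nonneg (by positivity), hexp, pow_succ q k,
    pow_add r]
  calc q ^ k * q * (r ^ 2 ^ k * r ^ (2 ^ k - 1)) = q * r ^ 2 ^ k * (q ^ k * r ^ (2 ^ k - 1)) := by
        ring
    _ ≤ 1 / 2 * (q ^ k * r ^ (2 ^ k - 1)) := by gcongr

lemma pow_two_pow_add_sub_one_le {r : ℝ} (hr0 : 0 ≤ r) (hr1 : r ≤ 1) (j m : ℕ) :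
    r ^ (2 ^ (j + m) - 1) ≤ (r ^ 2 ^ m) ^ j := by
  rw [← pow_mul]
  refine pow_le_pow_of_le_one hr0 hr1 ?_
  have hj : j + 1 ≤ 2 ^ j := Nat.lt_two_pow_self
  have hm : 1 ≤ 2 ^ m := Nat.one_le_two_pow
  have : 2 ^ m * j + 1 ≤ 2 ^ j * 2 ^ m := by nlinarith
  rw [pow_add]; omega

lemma tsum_pow_mul_pow_two_pow_sub_one_le {q r : ℝ} (hq : 1 < q) (hr0 : 0 ≤ r) (hr1 : r < 1)
    {m : ℕ} (hc : q * r ^ 2 ^ m < 1) :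
    ∑' k : ℕ, q ^ k * r ^ (2 ^ k - 1) ≤ q ^ m * (1 / (q - 1) + 1 / (1 - q * r ^ 2 ^ m)) := by
  have hsum := summable_pow_mul_pow_two_pow_sub_one (zero_le_one.trans hq.le) hr0 hr1
  have hhead : ∑ k ∈ Finset.range m, q ^ k * r ^ (2 ^ k - 1) ≤ q ^ m / (q - 1) := calc
    _ ≤ ∑ k ∈ Finset.range m, q ^ k :=
        Finset.sum_le_sum fun k _ => mul_le_of_le_one_right (by positivity) (pow_le_one₀ hr0 hr1.le)
    _ = (q ^ m - 1) / (q - 1) := geom_sum_eq hq.ne' m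
    _ ≤ q ^ m / (q - 1) := div_le_div_of_nonneg_right (by linarith) (by linarith)
  have hgeom : HasSum (fun j : ℕ => q ^ m * (q * r ^ 2 ^ m) ^ j)
      (q ^ m / (1 - q * r ^ 2 ^ m)) := by
    simpa [div_eq_mul_inv] using
      (hasSum_geometric_of_lt_one (by positivity) hc).mul_left (q ^ m)
  have htail : ∑' j : ℕ, q ^ (j + m) * r ^ (2 ^ (j + m) - 1) ≤ q ^ m / (1 - q * r ^ 2 ^ m) := by
    refine (((summable_nat_add_iff m).2 hsum).tsum_le_tsum (fun j => ?_) hgeom.summable).trans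
      hgeom.tsum_eq.le
    calc q ^ (j + m) * r ^ (2 ^ (j + m) - 1) ≤ q ^ (j + m) * (r ^ 2 ^ m) ^ j := by
          gcongr; exact pow_two_pow_add_sub_one_le hr0 hr1.le j m
      _ = q ^ m * (q * r ^ 2 ^ m) ^ j := by ring
  rw [← hsum.sum_add_tsum_nat_add m]
  linarith [mul_one_div (q ^ m) (q - 1), mul_one_div (q ^ m) (1 - q * r ^ 2 ^ m)]

lemma exists_two_pow_mul_mem_Icc {δ : ℝ} (hδ0 : 0 < δ) (hδ1 : δ ≤ 1) :
    ∃ m : ℕ, 1 ≤ 2 ^ m * δ ∧ 2 ^ m * δ ≤ 2 := by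
  obtain ⟨n, hn, hn'⟩ := exists_nat_pow_near (one_le_one_div hδ0 hδ1) (one_lt_two (α := ℝ))
  refine ⟨n + 1, ?_, ?_⟩
  · rw [one_div, inv_lt_iff_one_lt_mul₀ hδ0] at hn'; linarith
  · rw [le_div_iff₀ (by positivity)] at hn
    rw [pow_succ]; nlinarith

lemma pow_le_of_one_le_mul_one_sub {r : ℝ} (hr0 : 0 ≤ r) {n : ℕ} (hn : 1 ≤ n * (1 - r)) :
    r ^ n ≤ 3 / 8 := calc
  r ^ n ≤ Real.exp (-(1 - r)) ^ n :=
      pow_le_pow_left₀ hr0 (by linarith [Real.one_sub_le_exp_neg (1 - r)]) n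
  _ = Real.exp (-(n * (1 - r))) := by rw [← Real.exp_nat_mul]; ring_nf
  _ ≤ Real.exp (-1) := by gcongr
  _ ≤ 3 / 8 := by
      rw [Real.exp_neg, inv_le_comm₀ (Real.exp_pos 1) (by norm_num)]
      linarith [Real.exp_one_gt_d9]

noncomputable def gapConst (s : ℝ) : ℝ := 2 * (1 / (2 ^ s - 1) + 4)

lemma gapConst_pos {s : ℝ} (hs : 0 < s) : 0 < gapConst s := by
  have : 0 < (2 : ℝ) ^ s - 1 := sub_pos.2 (Real.one_lt_rpow one_lt_two hs)
  unfold gapConst; positivity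

lemma one_sub_rpow_mul_tsum_rpow_two_pow_mul_pow_le {s r : ℝ} (hs0 : 0 < s) (hs1 : s ≤ 1)
    (hr0 : 0 ≤ r) (hr1 : r < 1) :
    (1 - r) ^ s * ∑' k : ℕ, ((2 : ℝ) ^ s) ^ k * r ^ (2 ^ k - 1) ≤ gapConst s := by
  obtain ⟨m, hm1, hm2⟩ := exists_two_pow_mul_mem_Icc (sub_pos.2 hr1) (by linarith)
  set q : ℝ := 2 ^ s
  have hq1 : 1 < q := Real.one_lt_rpow one_lt_two hs0
  have hq2 : q ≤ 2 := Real.rpow_le_self_of_one_le one_le_two hs1 |>.trans_eq (by norm_num)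
  have hqm : (1 - r) ^ s * q ^ m ≤ 2 := calc
    (1 - r) ^ s * q ^ m = (2 ^ m * (1 - r)) ^ s := by
      rw [Real.rpow_pow_comm zero_le_two, Real.mul_rpow (by positivity) (by linarith), mul_comm]
    _ ≤ q := Real.rpow_le_rpow (by positivity) hm2 hs0.le
    _ ≤ 2 := hq2
  have hc : q * r ^ 2 ^ m ≤ 3 / 4 := by
    have := pow_le_of_one_le_mul_one_sub hr0 (n := 2 ^ m) (by exact_mod_cast hm1)
    nlinarith
  have hc' : 1 / (1 - q * r ^ 2 ^ m) ≤ 4 := by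
    rw [div_le_iff₀ (by linarith)]; linarith
  have : 0 < q - 1 := by linarith
  have : 0 < 1 - q * r ^ 2 ^ m := by linarith
  calc _ ≤ (1 - r) ^ s * (q ^ m * (1 / (q - 1) + 1 / (1 - q * r ^ 2 ^ m))) := by
        gcongr
        exact tsum_pow_mul_pow_two_pow_sub_one_le hq1 hr0 hr1 (by linarith)
    _ = (1 - r) ^ s * q ^ m * (1 / (q - 1) + 1 / (1 - q * r ^ 2 ^ m)) := by ring
    _ ≤ 2 * (1 / (q - 1) + 4) := by gcongr

lemma inv_two_pow_mem_Ioc (k : ℕ) : (2⁻¹ : ℝ) ^ k ∈ Ioc (0 : ℝ) 1 :=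
  ⟨by positivity, pow_le_one₀ (by norm_num) (by norm_num)⟩

lemma rpow_inv_two_pow_div_mul_two_pow {δ : ℝ} (hδ : 0 < δ) (s : ℝ) (k : ℕ) :
    ((2⁻¹ : ℝ) ^ k / δ) ^ (1 - s) * 2 ^ k = δ ^ (s - 1) * ((2 : ℝ) ^ s) ^ k := by
  rw [Real.rpow_pow_comm (by norm_num), inv_pow, div_eq_mul_inv, ← mul_inv,
    Real.inv_rpow (by positivity), ← Real.rpow_neg (by positivity), neg_sub,
    Real.mul_rpow (by positivity) hδ.le, Real.rpow_sub_one (by positivity)]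
  field_simp

section Weight

variable {ω : ℝ → ℝ} {ε s : ℝ}

lemma le_mul_rpow_div_add_one (hωpos : ∀ t ∈ Ioc (0 : ℝ) 1, 0 < ω t)
    (hωmono : MonotoneOn ω (Ioc (0 : ℝ) 1))
    (hreg : AntitoneOn (fun t : ℝ => ω t / t ^ (1 - ε)) (Ioc (0 : ℝ) 1)) (hsε : s ≤ ε)
    {δ t : ℝ} (hδ : δ ∈ Ioc (0 : ℝ) 1) (ht : t ∈ Ioc (0 : ℝ) 1) :
    ω t ≤ ω δ * ((t / δ) ^ (1 - s) + 1) := by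
  have hpow : 0 ≤ (t / δ) ^ (1 - s) := Real.rpow_nonneg (div_nonneg ht.1.le hδ.1.le) _
  rcases le_total t δ with htδ | hδt
  · nlinarith [hωmono ht hδ htδ, hωpos δ hδ]
  · have hquot : ω t ≤ ω δ * (t / δ) ^ (1 - ε) := by
      have := hreg hδ ht hδt
      rw [div_le_div_iff₀ (Real.rpow_pos_of_pos ht.1 _)
        (Real.rpow_pos_of_pos hδ.1 _)] at this
      rw [Real.div_rpow ht.1.le hδ.1.le, mul_div_assoc', le_div_iff₀ (Real.rpow_pos_of_pos hδ.1 _)]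
      linarith
    have hexp : (t / δ) ^ (1 - ε) ≤ (t / δ) ^ (1 - s) :=
      Real.rpow_le_rpow_of_exponent_le ((one_le_div hδ.1).2 hδt) (by linarith)
    nlinarith [hωpos δ hδ]

lemma norm_le_apply_one (hωmono : MonotoneOn ω (Ioc (0 : ℝ) 1)) {a : ℕ → ℂ}
    (ha : ∀ k, ‖a k‖ ≤ ω (2⁻¹ ^ k)) (k : ℕ) : ‖a k‖ ≤ ω 1 :=
  (ha k).trans (hωmono (inv_two_pow_mem_Ioc k) ⟨one_pos, le_rfl⟩ (inv_two_pow_mem_Ioc k).2)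

lemma norm_mul_two_pow_le (hωpos : ∀ t ∈ Ioc (0 : ℝ) 1, 0 < ω t)
    (hωmono : MonotoneOn ω (Ioc (0 : ℝ) 1))
    (hreg : AntitoneOn (fun t : ℝ => ω t / t ^ (1 - ε)) (Ioc (0 : ℝ) 1)) (hsε : s ≤ ε)
    {a : ℕ → ℂ} (ha : ∀ k, ‖a k‖ ≤ ω (2⁻¹ ^ k)) {δ : ℝ} (hδ : δ ∈ Ioc (0 : ℝ) 1) (k : ℕ) :
    ‖a k‖ * 2 ^ k ≤ ω δ * (δ ^ (s - 1) * ((2 : ℝ) ^ s) ^ k + 2 ^ k) := calc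
  ‖a k‖ * 2 ^ k ≤ ω δ * ((2⁻¹ ^ k / δ) ^ (1 - s) + 1) * 2 ^ k := by
      gcongr
      exact (ha k).trans (le_mul_rpow_div_add_one hωpos hωmono hreg hsε hδ (inv_two_pow_mem_Ioc k))
  _ = ω δ * (δ ^ (s - 1) * ((2 : ℝ) ^ s) ^ k + 2 ^ k) := by
      linear_combination ω δ * rpow_inv_two_pow_div_mul_two_pow hδ.1 s k

end Weight

section GapSeries

variable {a : ℕ → ℂ} {n : ℕ → ℕ} {M : ℝ}

lemma norm_mul_pow_le_mul_pow (ha : ∀ k, ‖a k‖ ≤ M) (hn : ∀ k, k ≤ n k) {ρ : ℝ} (hρ1 : ρ ≤ 1)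
    {w : ℂ} (hw : ‖w‖ ≤ ρ) (k : ℕ) : ‖a k * w ^ n k‖ ≤ M * ρ ^ k := by
  have hρ0 : 0 ≤ ρ := (norm_nonneg w).trans hw
  rw [norm_mul, norm_pow]
  gcongr
  · exact (norm_nonneg _).trans (ha 0)
  · exact ha k
  · exact (pow_le_pow_left₀ (norm_nonneg w) hw _).trans (pow_le_pow_of_le_one hρ0 hρ1 (hn k))

lemma hasSum_mul_pow (ha : ∀ k, ‖a k‖ ≤ M) (hn : ∀ k, k ≤ n k) {z : ℂ} (hz : ‖z‖ < 1) :
    HasSum (fun k => a k * z ^ n k) (∑' k, a k * z ^ n k) :=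
  (Summable.of_norm_bounded ((summable_geometric_of_lt_one (norm_nonneg z) hz).mul_left M)
    (norm_mul_pow_le_mul_pow ha hn hz.le le_rfl)).hasSum

lemma differentiableOn_tsum_mul_pow (ha : ∀ k, ‖a k‖ ≤ M) (hn : ∀ k, k ≤ n k) {ρ : ℝ}
    (hρ0 : 0 ≤ ρ) (hρ1 : ρ < 1) :
    DifferentiableOn ℂ (fun w => ∑' k, a k * w ^ n k) (ball 0 ρ) := by
  refine Complex.differentiableOn_tsum_of_summable_norm
    ((summable_geometric_of_lt_one hρ0 hρ1).mul_left M) (fun k => by fun_prop) isOpen_ball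
    fun k w hw => norm_mul_pow_le_mul_pow ha hn hρ1.le ?_ k
  exact (mem_ball_zero_iff.1 hw).le

lemma differentiableOn_ball_one_tsum_mul_pow (ha : ∀ k, ‖a k‖ ≤ M) (hn : ∀ k, k ≤ n k) :
    DifferentiableOn ℂ (fun w => ∑' k, a k * w ^ n k) (ball 0 1) := fun z hz => by
  obtain ⟨ρ, hzρ, hρ1⟩ := exists_between (mem_ball_zero_iff.1 hz)
  exact ((differentiableOn_tsum_mul_pow ha hn ((norm_nonneg z).trans hzρ.le) hρ1).differentiableAt
    (isOpen_ball.mem_nhds (mem_ball_zero_iff.2 hzρ))).differentiableWithinAt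

lemma hasSum_deriv_tsum_mul_pow (ha : ∀ k, ‖a k‖ ≤ M) (hn : ∀ k, k ≤ n k) {z : ℂ} (hz : ‖z‖ < 1) :
    HasSum (fun k => a k * (n k * z ^ (n k - 1))) (deriv (fun w => ∑' k, a k * w ^ n k) z) := by
  obtain ⟨ρ, hzρ, hρ1⟩ := exists_between hz
  simpa using Complex.hasSum_deriv_of_summable_norm
    ((summable_geometric_of_lt_one ((norm_nonneg z).trans hzρ.le) hρ1).mul_left M)
    (fun k => (by fun_prop : Differentiable ℂ fun w => a k * w ^ n k).differentiableOn)
    isOpen_ball (fun k w hw => norm_mul_pow_le_mul_pow ha hn hρ1.le (mem_ball_zero_iff.1 hw).le k)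
    (mem_ball_zero_iff.2 hzρ)

end GapSeries

theorem norm_deriv_tsum_mul_two_pow_mul_le {ω : ℝ → ℝ} {ε s : ℝ}
    (hωpos : ∀ t ∈ Ioc (0 : ℝ) 1, 0 < ω t) (hωmono : MonotoneOn ω (Ioc (0 : ℝ) 1))
    (hreg : AntitoneOn (fun t : ℝ => ω t / t ^ (1 - ε)) (Ioc (0 : ℝ) 1))
    (hs0 : 0 < s) (hs1 : s ≤ 1) (hsε : s ≤ ε)
    {a : ℕ → ℂ} (ha : ∀ k, ‖a k‖ ≤ ω (2⁻¹ ^ k)) {z : ℂ} (hz : ‖z‖ < 1) :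
    ‖deriv (fun w => ∑' k, a k * w ^ 2 ^ k) z‖ * (1 - ‖z‖)
      ≤ (gapConst s + gapConst 1) * ω (1 - ‖z‖) := by
  set δ := 1 - ‖z‖
  have hδ : δ ∈ Ioc (0 : ℝ) 1 := ⟨by linarith, by linarith [norm_nonneg z]⟩
  have hωδ : 0 ≤ ω δ := (hωpos δ hδ).le
  have hSq := summable_pow_mul_pow_two_pow_sub_one (q := (2 : ℝ) ^ s) (by positivity)
    (norm_nonneg z) hz
  have hS2 := summable_pow_mul_pow_two_pow_sub_one (q := 2) zero_le_two (norm_nonneg z) hz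
  set Sq := ∑' k : ℕ, ((2 : ℝ) ^ s) ^ k * ‖z‖ ^ (2 ^ k - 1)
  set S2 := ∑' k : ℕ, (2 : ℝ) ^ k * ‖z‖ ^ (2 ^ k - 1)
  have hterm : ∀ k, ‖a k * ((2 ^ k : ℕ) * z ^ (2 ^ k - 1))‖ ≤ ω δ *
      (δ ^ (s - 1) * (((2 : ℝ) ^ s) ^ k * ‖z‖ ^ (2 ^ k - 1)) + 2 ^ k * ‖z‖ ^ (2 ^ k - 1)) := by
    intro k
    rw [norm_mul, norm_mul, norm_pow, Complex.norm_natCast]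
    push_cast
    calc ‖a k‖ * (2 ^ k * ‖z‖ ^ (2 ^ k - 1)) = ‖a k‖ * 2 ^ k * ‖z‖ ^ (2 ^ k - 1) := by ring
      _ ≤ ω δ * (δ ^ (s - 1) * ((2 : ℝ) ^ s) ^ k + 2 ^ k) * ‖z‖ ^ (2 ^ k - 1) :=
        mul_le_mul_of_nonneg_right (norm_mul_two_pow_le hωpos hωmono hreg hsε ha hδ k)
          (by positivity)
      _ = _ := by ring
  have hderiv : ‖deriv (fun w => ∑' k, a k * w ^ 2 ^ k) z‖ ≤ ω δ * (δ ^ (s - 1) * Sq + S2) :=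
    (hasSum_deriv_tsum_mul_pow (norm_le_apply_one hωmono ha) (fun k => Nat.lt_two_pow_self.le)
      hz).norm_le_of_bounded (((hSq.hasSum.mul_left _).add hS2.hasSum).mul_left (ω δ)) hterm
  have hSq_le : δ ^ s * Sq ≤ gapConst s :=
    one_sub_rpow_mul_tsum_rpow_two_pow_mul_pow_le hs0 hs1 (norm_nonneg z) hz
  have hS2_le : δ * S2 ≤ gapConst 1 := by
    have := one_sub_rpow_mul_tsum_rpow_two_pow_mul_pow_le one_pos le_rfl (norm_nonneg z) hz
    rwa [Real.rpow_one, Real.rpow_one] at this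
  have hδs : δ ^ (s - 1) * δ = δ ^ s := by
    rw [Real.rpow_sub_one hδ.1.ne', div_mul_cancel₀ _ hδ.1.ne']
  calc ‖deriv (fun w => ∑' k, a k * w ^ 2 ^ k) z‖ * δ ≤ ω δ * (δ ^ (s - 1) * Sq + S2) * δ := by
        gcongr
    _ = ω δ * (δ ^ s * Sq + δ * S2) := by rw [← hδs]; ring
    _ ≤ (gapConst s + gapConst 1) * ω δ := by nlinarith

/-- for `ω` increasing with `ω(t)/t^{1-ε}` decreasing for some `ε > 0`, there is a
constant `C = C(ω) > 0` such that every Hadamard gap series `Σ a_k z^{2^k}` with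
`|a_k| ≤ ω(2^{-k})` is holomorphic on the unit disc and satisfies
`|f′(z)|(1-|z|) ≤ C ω(1-|z|)`; in particular `f ∈ B^ω(B_1)`. -/
theorem stmt3 (ω : ℝ → ℝ)
    (hωpos : ∀ t ∈ Set.Ioc (0 : ℝ) 1, 0 < ω t)
    (hωmono : MonotoneOn ω (Set.Ioc (0 : ℝ) 1))
    (hωreg : ∃ ε : ℝ, 0 < ε ∧
      AntitoneOn (fun t : ℝ => ω t / t ^ ((1 : ℝ) - ε)) (Set.Ioc (0 : ℝ) 1)) :
    ∃ C : ℝ, 0 < C ∧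
      ∀ a : ℕ → ℂ, (∀ k : ℕ, ‖a k‖ ≤ ω ((2 : ℝ)⁻¹ ^ k)) →
        ∀ f : ℂ → ℂ, (f = fun z : ℂ => ∑' k : ℕ, a k * z ^ (2 ^ k)) →
          (∀ z ∈ ball (0 : ℂ) 1, HasSum (fun k : ℕ => a k * z ^ (2 ^ k)) (f z)) ∧
          DifferentiableOn ℂ f (ball 0 1) ∧
          ∀ z ∈ ball (0 : ℂ) 1, ‖deriv f z‖ * (1 - ‖z‖) ≤ C * ω (1 - ‖z‖) := by
  obtain ⟨ε, hε, hreg⟩ := hωreg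
  have hs0 : 0 < min ε 1 := lt_min hε one_pos
  refine ⟨gapConst (min ε 1) + gapConst 1, add_pos (gapConst_pos hs0) (gapConst_pos one_pos),
    fun a ha f hf => ?_⟩
  have hM := norm_le_apply_one hωmono ha
  have hn : ∀ k : ℕ, k ≤ 2 ^ k := fun k => Nat.lt_two_pow_self.le
  subst hf
  exact ⟨fun z hz => hasSum_mul_pow hM hn (mem_ball_zero_iff.1 hz),
    differentiableOn_ball_one_tsum_mul_pow hM hn,
    fun z hz => norm_deriv_tsum_mul_two_pow_mul_le hωpos hωmono hreg hs0 (min_le_right _ _)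
      (min_le_left _ _) ha (mem_ball_zero_iff.1 hz)⟩
end

section
/- Let ω : (0,1] → (0,∞) be an increasing function, and define Ψ(r) = Σ_{k=0}^∞ ω²(2^{-k}) r^{2^k − 1} for 0 ≤ r < 1. Then there exists a constant C = C(ω) > 0 such that Ψ(r) ≥ C · Φ(1−r) for all 0 ≤ r < 1. -/
open MeasureTheory Metric Set Filter

/-- `Φ_ω(x) = 1 + ∫_x^1 ω(t)^2 / t dt`. -/
noncomputable def Phi (ω : ℝ → ℝ) (x : ℝ) : ℝ := 1 + ∫ t in Set.Ioc x 1, ω t ^ 2 / t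

/-!
Split `(1 - r, 1]` into the dyadic blocks `(2⁻ᵏ⁻¹, 2⁻ᵏ]`, `k ≤ n`, where `2⁻ⁿ⁻¹ < 1 - r ≤ 2⁻ⁿ`.
Since `ω` is increasing, the block `k` contributes at most `ω²(2⁻ᵏ) log 2` to the integral.
On the other hand `1 - r ≤ 2⁻ᵏ` for `k ≤ n`, and Bernoulli's inequality then gives
`r ^ (2ᵏ - 1) ≥ 1/4`, so these same `ω²(2⁻ᵏ)` are at most `4 Ψ(r)` in total. The constant `1`
in `Φ` is absorbed by the term `k = 0` of `Ψ`, which is `ω²(1) > 0`.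
-/

open Real

lemma quarter_le_pow_two_pow_sub_one {r : ℝ} (hr0 : 0 ≤ r) (hr1 : r ≤ 1) {k : ℕ}
    (hk : 1 - r ≤ 2⁻¹ ^ k) : 1 / 4 ≤ r ^ (2 ^ k - 1) := by
  cases k with
  | zero => norm_num
  | succ n =>
    have half_le : 1 / 2 ≤ r ^ 2 ^ n := by
      have bernoulli := one_add_mul_le_pow (show (-2 : ℝ) ≤ r - 1 by linarith) (2 ^ n)
      have h2n : (2 : ℝ) ^ n * 2⁻¹ ^ (n + 1) = 1 / 2 := by
        rw [pow_succ, ← mul_assoc, ← mul_pow]; norm_num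
      rw [add_sub_cancel] at bernoulli
      push_cast at bernoulli
      nlinarith [pow_pos (two_pos : (0 : ℝ) < 2) n]
    calc (1 / 4 : ℝ) = (1 / 2) ^ 2 := by norm_num
      _ ≤ (r ^ 2 ^ n) ^ 2 := pow_le_pow_left₀ (by norm_num) half_le 2
      _ = r ^ 2 ^ (n + 1) := by rw [← pow_mul, pow_succ]
      _ ≤ r ^ (2 ^ (n + 1) - 1) := pow_le_pow_of_le_one hr0 hr1 (Nat.sub_le _ _)

section DyadicSeries

variable {c : ℕ → ℝ} {r : ℝ}

lemma summable_mul_pow_two_pow_sub_one {M : ℝ} (hc0 : ∀ k, 0 ≤ c k) (hcM : ∀ k, c k ≤ M)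
    (hr0 : 0 ≤ r) (hr1 : r < 1) : Summable fun k => c k * r ^ (2 ^ k - 1) := by
  refine Summable.of_nonneg_of_le (fun k => mul_nonneg (hc0 k) (by positivity)) (fun k => ?_)
    ((summable_geometric_of_lt_one hr0 hr1).mul_left M)
  have hpow : r ^ (2 ^ k - 1) ≤ r ^ k :=
    pow_le_pow_of_le_one hr0 hr1.le (Nat.le_sub_one_of_lt k.lt_two_pow_self)
  exact mul_le_mul (hcM k) hpow (by positivity) ((hc0 k).trans (hcM k))

lemma sum_range_succ_le_four_mul_tsum (hc0 : ∀ k, 0 ≤ c k)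
    (hc : Summable fun k => c k * r ^ (2 ^ k - 1)) (hr0 : 0 ≤ r) (hr1 : r ≤ 1) {n : ℕ}
    (hn : 1 - r ≤ 2⁻¹ ^ n) :
    ∑ k ∈ Finset.range (n + 1), c k ≤ 4 * ∑' k, c k * r ^ (2 ^ k - 1) := by
  calc ∑ k ∈ Finset.range (n + 1), c k = 4 * ∑ k ∈ Finset.range (n + 1), c k * (1 / 4) := by
        rw [← Finset.sum_mul]; ring
    _ ≤ 4 * ∑ k ∈ Finset.range (n + 1), c k * r ^ (2 ^ k - 1) := by
        gcongr with k hk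
        · exact hc0 k
        refine quarter_le_pow_two_pow_sub_one hr0 hr1 (hn.trans ?_)
        exact pow_le_pow_of_le_one (by norm_num) (by norm_num) (Finset.mem_range_succ_iff.mp hk)
    _ ≤ 4 * ∑' k, c k * r ^ (2 ^ k - 1) := by
        gcongr
        exact hc.sum_le_tsum _ fun k _ => mul_nonneg (hc0 k) (by positivity)

end DyadicSeries

section DyadicIntegral

variable {g : ℝ → ℝ} {a b : ℝ}

lemma MonotoneOn.intervalIntegrable_div_self (hg : MonotoneOn g (Ioc 0 1)) (ha : 0 < a)
    (hab : a ≤ b) (hb : b ≤ 1) : IntervalIntegrable (fun t => g t / t) volume a b := by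
  have hsub : uIcc a b ⊆ Ioc 0 1 := by
    rw [uIcc_of_le hab]; exact Icc_subset_Ioc ha hb
  have hinv : ContinuousOn (fun t : ℝ => t⁻¹) (uIcc a b) :=
    continuousOn_inv₀.mono fun t ht => ne_of_gt (hsub ht).1
  simpa only [div_eq_mul_inv] using (hg.mono hsub).intervalIntegrable.mul_continuousOn hinv

lemma MonotoneOn.integral_div_self_le (hg : MonotoneOn g (Ioc 0 1)) (ha : 0 < a)
    (hab : a ≤ b) (hb : b ≤ 1) : ∫ t in a..b, g t / t ≤ g b * log (b / a) := by
  have hb0 : 0 < b := ha.trans_le hab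
  have hconst : IntervalIntegrable (fun t => g b / t) volume a b :=
    (continuousOn_const.div continuousOn_id fun t ht =>
      ne_of_gt (ha.trans_le (uIcc_of_le hab ▸ ht).1)).intervalIntegrable
  calc ∫ t in a..b, g t / t ≤ ∫ t in a..b, g b / t :=
        intervalIntegral.integral_mono_on hab (hg.intervalIntegrable_div_self ha hab hb) hconst
          fun t ht => div_le_div_of_nonneg_right
            (hg ⟨ha.trans_le ht.1, ht.2.trans hb⟩ ⟨hb0, hb⟩ ht.2) (ha.trans_le ht.1).le
    _ = g b * log (b / a) := by
        simp only [div_eq_mul_inv (g b)]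
        rw [intervalIntegral.integral_const_mul, integral_inv_of_pos ha hb0]

lemma MonotoneOn.integral_div_self_le_log_two_mul_sum (hg : MonotoneOn g (Ioc 0 1)) (K : ℕ) :
    ∫ t in (2⁻¹ : ℝ) ^ K..1, g t / t ≤ log 2 * ∑ k ∈ Finset.range K, g (2⁻¹ ^ k) := by
  induction K with
  | zero => simp
  | succ n ih =>
    have h0 : (0 : ℝ) < 2⁻¹ ^ (n + 1) := by positivity
    have h1 : (2⁻¹ : ℝ) ^ (n + 1) ≤ 2⁻¹ ^ n :=
      pow_le_pow_of_le_one (by norm_num) (by norm_num) n.le_succ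
    have h2 : (2⁻¹ : ℝ) ^ n ≤ 1 := pow_le_one₀ (by norm_num) (by norm_num)
    have hratio : (2⁻¹ : ℝ) ^ n / 2⁻¹ ^ (n + 1) = 2 := by
      rw [pow_succ]; field_simp
    have block := hg.integral_div_self_le h0 h1 h2
    rw [hratio] at block
    rw [← intervalIntegral.integral_add_adjacent_intervals
      (hg.intervalIntegrable_div_self h0 h1 h2)
      (hg.intervalIntegrable_div_self (h0.trans_le h1) h2 le_rfl), Finset.sum_range_succ]
    linarith

end DyadicIntegral

lemma Phi_eq_intervalIntegral (ω : ℝ → ℝ) {x : ℝ} (hx : x ≤ 1) :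
    Phi ω x = 1 + ∫ t in x..1, ω t ^ 2 / t := by
  rw [Phi, intervalIntegral.integral_of_le hx]

lemma Phi_one_sub_le (ω : ℝ → ℝ) (hωpos : ∀ t ∈ Ioc (0 : ℝ) 1, 0 < ω t)
    (hωmono : MonotoneOn ω (Ioc 0 1)) {r : ℝ} (hr : r ∈ Ico (0 : ℝ) 1) :
    Phi ω (1 - r) ≤
      ((ω 1 ^ 2)⁻¹ + 4 * log 2) * ∑' k : ℕ, ω ((2 : ℝ)⁻¹ ^ k) ^ 2 * r ^ (2 ^ k - 1) := by
  obtain ⟨hr0, hr1⟩ := hr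
  have hg : MonotoneOn (fun t => ω t ^ 2) (Ioc 0 1) := fun s hs t ht hst =>
    pow_le_pow_left₀ (hωpos s hs).le (hωmono hs ht hst) 2
  have hmem : ∀ k : ℕ, (2⁻¹ : ℝ) ^ k ∈ Ioc 0 1 := fun k =>
    ⟨by positivity, pow_le_one₀ (by norm_num) (by norm_num)⟩
  have hsum : Summable fun k : ℕ => ω (2⁻¹ ^ k) ^ 2 * r ^ (2 ^ k - 1) :=
    summable_mul_pow_two_pow_sub_one (fun k => sq_nonneg _)
      (fun k => hg (hmem k) ⟨one_pos, le_rfl⟩ (hmem k).2) hr0 hr1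
  set S := ∑' k : ℕ, ω ((2 : ℝ)⁻¹ ^ k) ^ 2 * r ^ (2 ^ k - 1)
  have hω1 : 0 < ω 1 ^ 2 := pow_pos (hωpos 1 ⟨one_pos, le_rfl⟩) 2
  have hS : 1 ≤ (ω 1 ^ 2)⁻¹ * S := by
    rw [le_inv_mul_iff₀ hω1, mul_one]
    simpa only [pow_zero, Nat.sub_self, mul_one] using
      hsum.le_tsum 0 fun k _ => mul_nonneg (sq_nonneg _) (by positivity)
  obtain ⟨n, hlt, hle⟩ := exists_nat_pow_near_of_lt_one (sub_pos.2 hr1) (by linarith)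
    (by norm_num : (0 : ℝ) < 2⁻¹) (by norm_num)
  have h0 : (0 : ℝ) < 2⁻¹ ^ (n + 1) := by positivity
  have hint : ∫ t in (1 - r)..1, ω t ^ 2 / t ≤ 4 * log 2 * S :=
    calc ∫ t in (1 - r)..1, ω t ^ 2 / t ≤ ∫ t in (2⁻¹ : ℝ) ^ (n + 1)..1, ω t ^ 2 / t :=
          intervalIntegral.integral_mono_interval hlt.le (by linarith) le_rfl
            ((ae_restrict_iff' measurableSet_Ioc).2 <| ae_of_all _ fun t ht =>
              div_nonneg (sq_nonneg _) (h0.trans ht.1).le)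
            (hg.intervalIntegrable_div_self h0 (hmem (n + 1)).2 le_rfl)
      _ ≤ log 2 * ∑ k ∈ Finset.range (n + 1), ω (2⁻¹ ^ k) ^ 2 :=
          hg.integral_div_self_le_log_two_mul_sum (n + 1)
      _ ≤ log 2 * (4 * S) := by
          gcongr
          exact sum_range_succ_le_four_mul_tsum (fun k => sq_nonneg _) hsum hr0 hr1.le hle
      _ = 4 * log 2 * S := by ring
  rw [Phi_eq_intervalIntegral ω (by linarith), add_mul]
  linarith

/-- if `ω` is increasing, then `Ψ(r) = Σ_k ω²(2^{-k}) r^{2^k - 1}` satisfies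
`Ψ(r) ≥ C Φ(1-r)` for a constant `C = C(ω) > 0`. -/
theorem stmt5 (ω : ℝ → ℝ)
    (hωpos : ∀ t ∈ Set.Ioc (0 : ℝ) 1, 0 < ω t)
    (hωmono : MonotoneOn ω (Set.Ioc (0 : ℝ) 1)) :
    ∃ C : ℝ, 0 < C ∧ ∀ r ∈ Set.Ico (0 : ℝ) 1,
      C * Phi ω (1 - r) ≤ ∑' k : ℕ, ω ((2 : ℝ)⁻¹ ^ k) ^ 2 * r ^ (2 ^ k - 1) := by
  have hD : 0 < (ω 1 ^ 2)⁻¹ + 4 * log 2 := by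
    have := hωpos 1 ⟨one_pos, le_rfl⟩
    have := log_pos one_lt_two
    positivity
  refine ⟨((ω 1 ^ 2)⁻¹ + 4 * log 2)⁻¹, inv_pos.2 hD, fun r hr => ?_⟩
  rw [inv_mul_le_iff₀ hD]
  exact Phi_one_sub_le ω hωpos hωmono hr
end

section
/- Let ω : (0,1] → (0,∞) be increasing with ω(t)/t^{1−ε} decreasing on (0,1] for some ε > 0. Then there exists a constant C = C(ω) > 0 with the following property: if for each k ≥ 0, P_k : ℂ^d → ℂ is a holomorphic homogeneous polynomial of degree 2^k (i.e., P_k(λz) = λ^{2^k} P_k(z) for λ ∈ ℂ) with sup_{ζ ∈ S_d} |P_k(ζ)| ≤ 1, and η_k ∈ ℂ satisfies |η_k| ≤ 1 for all k, then the series f(z) = Σ_{k=0}^∞ η_k ω(2^{-k}) P_k(z) converges locally uniformly on B_d to a holomorphic function with ‖f‖_{B^ω(B_d)} ≤ C. -/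
open MeasureTheory Metric Set Filter

noncomputable instance (d : ℕ) : MeasurableSpace (EuclideanSpace ℂ (Fin d)) := borel _
instance (d : ℕ) : BorelSpace (EuclideanSpace ℂ (Fin d)) := ⟨rfl⟩

/-- A fixed additive Haar (Lebesgue) measure on `ℂ^d`. -/
noncomputable def haarCd (d : ℕ) : Measure (EuclideanSpace ℂ (Fin d)) :=
  (Module.Basis.ofVectorSpace ℝ (EuclideanSpace ℂ (Fin d))).addHaar

/-- The normalized surface measure `σ_d` on the unit sphere of `ℂ^d`. -/
noncomputable def sigmaD (d : ℕ) : Measure (sphere (0 : EuclideanSpace ℂ (Fin d)) 1) :=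
  ((haarCd d).toSphere Set.univ)⁻¹ • (haarCd d).toSphere

/-- The radial derivative `Rf(z) = Σ z_j ∂f/∂z_j (z)` of a holomorphic function. -/
noncomputable def radDeriv {d : ℕ} (f : EuclideanSpace ℂ (Fin d) → ℂ)
    (z : EuclideanSpace ℂ (Fin d)) : ℂ := fderiv ℂ f z z

/-!
On `‖z‖ ≤ ρ < 1` the terms are bounded by `ω(1) ρ^k`, so the series converges locally uniformly
and, by Cauchy estimates on complex lines, may be differentiated termwise. Euler's identity
`R P_k = 2^k P_k` then gives `|Rf(z)| ≤ ∑ ω(2^{-k}) 2^k r^{2^k}` with `r = ‖z‖`. Put `s = 1 - r` and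
split at `2^{-N-1} < s ≤ 2^{-N}`. For `k ≤ N` the regularity of `ω(t)/t^{1-ε}` gives
`ω(2^{-k}) 2^k ≤ (ω(s)/s) (2^k s)^ε`, a geometric sum of size `ω(s)/s · 2^ε/(2^ε - 1)`. For `k > N`
we use `ω(2^{-k}) ≤ ω(s)` and `n² rⁿ ≤ 2/s²`, and the tail is geometric too, of size `4 ω(s)/s`.
-/

section CauchyEstimate

variable {E F : Type*} [NormedAddCommGroup E] [NormedSpace ℂ E] [NormedAddCommGroup F]
  [NormedSpace ℂ F]

lemma norm_fderiv_le_of_forall_norm_le {Q : E → F} (hQ : Differentiable ℂ Q) {x : E} {δ M : ℝ}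
    (hδ : 0 < δ) (hM : ∀ y : E, ‖y‖ ≤ ‖x‖ + δ → ‖Q y‖ ≤ M) : ‖fderiv ℂ Q x‖ ≤ M / δ := by
  have hM0 : 0 ≤ M := (norm_nonneg _).trans (hM x (by linarith))
  refine ContinuousLinearMap.opNorm_le_bound _ (by positivity) fun v => ?_
  rcases eq_or_ne v 0 with rfl | hv
  · simp
  have hvn : 0 < ‖v‖ := norm_pos_iff.2 hv
  have hline : HasDerivAt (fun l : ℂ => Q (x + l • v)) (fderiv ℂ Q x v) 0 := by
    have h := ((hasDerivAt_id (0 : ℂ)).smul_const v).const_add x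
    simp only [id, one_smul] at h
    exact (hQ x).hasFDerivAt.comp_hasDerivAt_of_eq (0 : ℂ) h (by simp)
  have hline_diff : Differentiable ℂ (fun l : ℂ => Q (x + l • v)) :=
    fun l => (hQ _).comp l (by fun_prop)
  -- Cauchy's estimate on the complex line through `x` in direction `v`, radius `δ / ‖v‖`.
  have hcauchy := Complex.norm_deriv_le_of_forall_mem_sphere_norm_le (div_pos hδ hvn)
    hline_diff.diffContOnCl
    (C := M) fun l hl => hM _ <| by
      rw [mem_sphere_zero_iff_norm] at hl
      calc ‖x + l • v‖ ≤ ‖x‖ + ‖l‖ * ‖v‖ := (norm_add_le _ _).trans_eq (by rw [norm_smul])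
        _ = ‖x‖ + δ := by rw [hl, div_mul_cancel₀ _ hvn.ne']
  rw [hline.deriv] at hcauchy
  calc ‖fderiv ℂ Q x v‖ ≤ M / (δ / ‖v‖) := hcauchy
    _ = M / δ * ‖v‖ := by field_simp

end CauchyEstimate

section Homogeneous

variable {E : Type*} [NormedAddCommGroup E] [NormedSpace ℂ E] {Q : E → ℂ} {n : ℕ}

lemma apply_zero_of_homogeneous (hn : n ≠ 0) (hom : ∀ (l : ℂ) (z : E), Q (l • z) = l ^ n * Q z) :
    Q 0 = 0 := by
  simpa [zero_pow hn] using hom 0 0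

lemma norm_apply_le_pow_of_homogeneous (hn : n ≠ 0)
    (hom : ∀ (l : ℂ) (z : E), Q (l • z) = l ^ n * Q z)
    (hsph : ∀ ζ ∈ sphere (0 : E) 1, ‖Q ζ‖ ≤ 1) (z : E) : ‖Q z‖ ≤ ‖z‖ ^ n := by
  rcases eq_or_ne z 0 with rfl | hz
  · simp [apply_zero_of_homogeneous hn hom]
  have h := hom ‖z‖ ((‖z‖ : ℂ)⁻¹ • z)
  rw [smul_inv_smul₀ (by exact_mod_cast norm_ne_zero_iff.2 hz)] at h
  rw [h, norm_mul, norm_pow, Complex.norm_real, norm_norm]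
  exact mul_le_of_le_one_right (by positivity)
    (hsph _ (mem_sphere_zero_iff_norm.2 (norm_smul_inv_norm hz)))

lemma fderiv_apply_self_of_homogeneous {z : E} (hQ : DifferentiableAt ℂ Q z)
    (hom : ∀ (l : ℂ) (z : E), Q (l • z) = l ^ n * Q z) : fderiv ℂ Q z z = n * Q z := by
  have hray : HasDerivAt (fun l : ℂ => Q (l • z)) (fderiv ℂ Q z z) 1 := by
    have h := (hasDerivAt_id (1 : ℂ)).smul_const z
    simp only [id, one_smul] at h
    exact hQ.hasFDerivAt.comp_hasDerivAt_of_eq (1 : ℂ) h (one_smul ℂ z).symm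
  simp only [hom] at hray
  simpa using hray.unique ((hasDerivAt_pow n (1 : ℂ)).mul_const (Q z))

end Homogeneous

section LacunarySeries

variable {E : Type*} [NormedAddCommGroup E] {c : ℕ → ℂ} {Q : ℕ → E → ℂ}
  {n : ℕ → ℕ} {M : ℝ}

lemma norm_apply_le_pow_of_le_degree (hQb : ∀ k x, ‖Q k x‖ ≤ ‖x‖ ^ n k) (hn : ∀ k, k ≤ n k)
    {R : ℝ} (hR : R ≤ 1) {x : E} (hx : ‖x‖ ≤ R) (k : ℕ) : ‖Q k x‖ ≤ R ^ k :=
  calc ‖Q k x‖ ≤ ‖x‖ ^ n k := hQb k x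
    _ ≤ R ^ n k := by gcongr
    _ ≤ R ^ k := pow_le_pow_of_le_one ((norm_nonneg x).trans hx) hR (hn k)

lemma norm_mul_apply_le_geometric (hc : ∀ k, ‖c k‖ ≤ M) (hQb : ∀ k x, ‖Q k x‖ ≤ ‖x‖ ^ n k)
    (hn : ∀ k, k ≤ n k) {R : ℝ} (hR : R ≤ 1) {x : E} (hx : ‖x‖ ≤ R) (k : ℕ) :
    ‖c k * Q k x‖ ≤ M * R ^ k := by
  rw [norm_mul]
  exact mul_le_mul (hc k) (norm_apply_le_pow_of_le_degree hQb hn hR hx k) (norm_nonneg _)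
    ((norm_nonneg _).trans (hc 0))

theorem tendstoLocallyUniformlyOn_sum_range_mul (hc : ∀ k, ‖c k‖ ≤ M)
    (hQb : ∀ k x, ‖Q k x‖ ≤ ‖x‖ ^ n k) (hn : ∀ k, k ≤ n k) :
    TendstoLocallyUniformlyOn (fun N x => ∑ k ∈ Finset.range N, c k * Q k x)
      (fun x => ∑' k, c k * Q k x) atTop (ball (0 : E) 1) := by
  refine tendstoLocallyUniformlyOn_of_forall_exists_nhds fun z hz => ?_
  obtain ⟨R, hzR, hR1⟩ := exists_between (mem_ball_zero_iff.1 hz)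
  refine ⟨ball 0 R, mem_nhdsWithin_of_mem_nhds (isOpen_ball.mem_nhds (mem_ball_zero_iff.2 hzR)),
    tendstoUniformlyOn_tsum_nat (u := fun k => M * R ^ k) ?_ fun k x hx => ?_⟩
  · exact (summable_geometric_of_lt_one ((norm_nonneg z).trans hzR.le) hR1).mul_left M
  · exact norm_mul_apply_le_geometric hc hQb hn hR1.le (mem_ball_zero_iff.1 hx).le k

lemma exists_summable_bound_norm_smul_fderiv [NormedSpace ℂ E] (hc : ∀ k, ‖c k‖ ≤ M)
    (hQd : ∀ k, Differentiable ℂ (Q k)) (hQb : ∀ k x, ‖Q k x‖ ≤ ‖x‖ ^ n k) (hn : ∀ k, k ≤ n k)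
    {z : E} (hz : ‖z‖ < 1) :
    ∃ R, ‖z‖ < R ∧ ∃ u : ℕ → ℝ, Summable u ∧
      ∀ k, ∀ x ∈ ball (0 : E) R, ‖c k • fderiv ℂ (Q k) x‖ ≤ u k := by
  obtain ⟨R, hzR, hR1⟩ := exists_between hz
  obtain ⟨R', hRR', hR'1⟩ := exists_between hR1
  have hR' : 0 ≤ R' := (norm_nonneg z).trans (hzR.trans hRR').le
  refine ⟨R, hzR, fun k => M * (R' ^ k / (R' - R)), ?_, fun k x hx => ?_⟩
  · exact ((summable_geometric_of_lt_one hR' hR'1).div_const _).mul_left M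
  rw [norm_smul]
  refine mul_le_mul (hc k) (norm_fderiv_le_of_forall_norm_le (hQd k) (sub_pos.2 hRR')
    fun y hy => norm_apply_le_pow_of_le_degree hQb hn hR'1.le ?_ k) (norm_nonneg _)
    ((norm_nonneg _).trans (hc 0))
  linarith [mem_ball_zero_iff.1 hx]

theorem hasFDerivAt_tsum_mul [NormedSpace ℂ E] (hc : ∀ k, ‖c k‖ ≤ M)
    (hQd : ∀ k, Differentiable ℂ (Q k)) (hQb : ∀ k x, ‖Q k x‖ ≤ ‖x‖ ^ n k) (hn : ∀ k, k ≤ n k)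
    {z : E} (hz : z ∈ ball (0 : E) 1) :
    HasFDerivAt (fun x => ∑' k, c k * Q k x) (∑' k, c k • fderiv ℂ (Q k) z) z := by
  obtain ⟨R, hzR, u, hu, hbound⟩ :=
    exists_summable_bound_norm_smul_fderiv hc hQd hQb hn (mem_ball_zero_iff.1 hz)
  have hzR' : z ∈ ball (0 : E) R := mem_ball_zero_iff.2 hzR
  refine hasFDerivAt_tsum_of_isPreconnected hu isOpen_ball (convex_ball 0 R).isPreconnected
    (fun k x _ => ((hQd k) x).hasFDerivAt.const_mul (c k)) hbound hzR' ?_ hzR'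
  have hz1 : ‖z‖ < 1 := mem_ball_zero_iff.1 hz
  exact .of_norm_bounded ((summable_geometric_of_lt_one (norm_nonneg z) hz1).mul_left M)
    (norm_mul_apply_le_geometric hc hQb hn hz1.le le_rfl)

theorem hasSum_fderiv_tsum_mul_apply_self [NormedSpace ℂ E] (hc : ∀ k, ‖c k‖ ≤ M)
    (hQd : ∀ k, Differentiable ℂ (Q k)) (hQb : ∀ k x, ‖Q k x‖ ≤ ‖x‖ ^ n k) (hn : ∀ k, k ≤ n k)
    (hom : ∀ (k : ℕ) (l : ℂ) (x : E), Q k (l • x) = l ^ n k * Q k x)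
    {z : E} (hz : z ∈ ball (0 : E) 1) :
    HasSum (fun k => c k * (n k * Q k z)) (fderiv ℂ (fun x => ∑' k, c k * Q k x) z z) := by
  obtain ⟨R, hzR, u, hu, hbound⟩ :=
    exists_summable_bound_norm_smul_fderiv hc hQd hQb hn (mem_ball_zero_iff.1 hz)
  have hsum := (Summable.of_norm_bounded hu fun k => hbound k z (mem_ball_zero_iff.2 hzR)).hasSum
  rw [(hasFDerivAt_tsum_mul hc hQd hQb hn hz).fderiv]
  have heuler : ∀ k, fderiv ℂ (Q k) z z = n k * Q k z :=
    fun k => fderiv_apply_self_of_homogeneous ((hQd k) z) (hom k)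
  simpa [heuler] using (ContinuousLinearMap.apply ℂ ℂ z).hasSum hsum

theorem norm_fderiv_tsum_mul_apply_self_le [NormedSpace ℂ E] (hc : ∀ k, ‖c k‖ ≤ M)
    (hQd : ∀ k, Differentiable ℂ (Q k)) (hQb : ∀ k x, ‖Q k x‖ ≤ ‖x‖ ^ n k) (hn : ∀ k, k ≤ n k)
    (hom : ∀ (k : ℕ) (l : ℂ) (x : E), Q k (l • x) = l ^ n k * Q k x) {b : ℕ → ℝ}
    (hcb : ∀ k, ‖c k‖ ≤ b k) {z : E} (hz : z ∈ ball (0 : E) 1)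
    (hb : Summable fun k => b k * n k * ‖z‖ ^ n k) :
    ‖fderiv ℂ (fun x => ∑' k, c k * Q k x) z z‖ ≤ ∑' k, b k * n k * ‖z‖ ^ n k := by
  refine (hasSum_fderiv_tsum_mul_apply_self hc hQd hQb hn hom hz).norm_le_of_bounded hb.hasSum
    fun k => ?_
  rw [norm_mul, norm_mul, Complex.norm_natCast, ← mul_assoc]
  exact mul_le_mul (mul_le_mul_of_nonneg_right (hcb k) (Nat.cast_nonneg _)) (hQb k z)
    (norm_nonneg _) (mul_nonneg ((norm_nonneg _).trans (hcb k)) (Nat.cast_nonneg _))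

end LacunarySeries

lemma sq_mul_pow_le_two {r : ℝ} (h0 : 0 ≤ r) (h1 : r ≤ 1) (n : ℕ) :
    ((n : ℝ) * (1 - r)) ^ 2 * r ^ n ≤ 2 := by
  set x := (n : ℝ) * (1 - r)
  have hx : 0 ≤ x := mul_nonneg n.cast_nonneg (by linarith)
  have hpow : r ^ n ≤ Real.exp (-x) := calc
    r ^ n ≤ Real.exp (r - 1) ^ n :=
      pow_le_pow_left₀ h0 (by linarith [Real.add_one_le_exp (r - 1)]) n
    _ = Real.exp (-x) := by rw [← Real.exp_nat_mul]; congr 1; ring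
  have hquad : x ^ 2 ≤ 2 * Real.exp x := by nlinarith [Real.quadratic_le_exp_of_nonneg hx]
  calc x ^ 2 * r ^ n ≤ 2 * Real.exp x * Real.exp (-x) := by gcongr
    _ = 2 := by rw [mul_assoc, ← Real.exp_add, add_neg_cancel, Real.exp_zero, mul_one]

lemma two_pow_mul_pow_two_pow_le {r : ℝ} (h0 : 0 ≤ r) (h1 : r < 1) (k : ℕ) :
    2 ^ k * r ^ 2 ^ k ≤ 2 / (1 - r) ^ 2 * 2⁻¹ ^ k := by
  have h := sq_mul_pow_le_two h0 h1.le (2 ^ k)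
  push_cast at h
  have hs : 0 < 1 - r := by linarith
  rw [inv_pow, div_mul_eq_mul_div, le_div_iff₀ (by positivity)]
  field_simp
  linarith

lemma div_le_div_mul_div_rpow_of_antitoneOn {ω : ℝ → ℝ} {ε : ℝ}
    (hanti : AntitoneOn (fun t : ℝ => ω t / t ^ ((1 : ℝ) - ε)) (Ioc 0 1))
    {s t : ℝ} (hs : s ∈ Ioc (0 : ℝ) 1) (ht : t ∈ Ioc (0 : ℝ) 1) (hst : s ≤ t) :
    ω t / t ≤ ω s / s * (s / t) ^ ε := by
  have h := hanti hs ht hst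
  simp only [Real.rpow_sub hs.1, Real.rpow_sub ht.1, Real.rpow_one] at h
  have hsε := Real.rpow_pos_of_pos hs.1 ε
  have htε := Real.rpow_pos_of_pos ht.1 ε
  calc ω t / t = ω t / (t / t ^ ε) / t ^ ε := by field_simp
    _ ≤ ω s / (s / s ^ ε) / t ^ ε := by gcongr
    _ = ω s / s * (s / t) ^ ε := by
      rw [Real.div_rpow hs.1.le ht.1.le]; field_simp

lemma sum_range_two_pow_mul_rpow_le {ε x : ℝ} (hε : 0 < ε) (hx : 0 ≤ x) {N : ℕ}
    (hN : 2 ^ N * x ≤ 1) :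
    ∑ k ∈ Finset.range (N + 1), ((2 : ℝ) ^ k * x) ^ ε ≤ 2 ^ ε / (2 ^ ε - 1) := by
  have hq : 1 < (2 : ℝ) ^ ε := Real.one_lt_rpow (by norm_num) hε
  have hterm : ∀ k : ℕ, ((2 : ℝ) ^ k * x) ^ ε = x ^ ε * ((2 : ℝ) ^ ε) ^ k := fun k => by
    rw [Real.mul_rpow (by positivity) hx, Real.rpow_pow_comm (by norm_num), mul_comm]
  have htop : ((2 : ℝ) ^ ε) ^ (N + 1) * x ^ ε ≤ 2 ^ ε := by
    rw [Real.rpow_pow_comm (by norm_num), ← Real.mul_rpow (by positivity) hx]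
    exact Real.rpow_le_rpow (by positivity) (by rw [pow_succ]; linarith) hε.le
  simp only [hterm, ← Finset.mul_sum, geom_sum_eq hq.ne']
  rw [mul_div_assoc', div_le_div_iff_of_pos_right (by linarith)]
  nlinarith [Real.rpow_nonneg hx ε]

lemma two_inv_pow_mem_Ioc (k : ℕ) : (2 : ℝ)⁻¹ ^ k ∈ Ioc (0 : ℝ) 1 :=
  ⟨by positivity, pow_le_one₀ (by norm_num) (by norm_num)⟩

section WeightedGapSum

variable {ω : ℝ → ℝ} {r : ℝ}

lemma weight_mul_two_pow_mul_pow_le (hωnn : ∀ t ∈ Ioc (0 : ℝ) 1, 0 ≤ ω t)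
    (hωmono : MonotoneOn ω (Ioc 0 1)) (h0 : 0 ≤ r) (h1 : r < 1) {u : ℝ} (hu : u ∈ Ioc (0 : ℝ) 1)
    {k : ℕ} (hk : 2⁻¹ ^ k ≤ u) :
    ω (2⁻¹ ^ k) * 2 ^ k * r ^ 2 ^ k ≤ ω u * (2 / (1 - r) ^ 2) * 2⁻¹ ^ k := by
  rw [mul_assoc, mul_assoc]
  exact mul_le_mul (hωmono (two_inv_pow_mem_Ioc k) hu hk) (two_pow_mul_pow_two_pow_le h0 h1 k)
    (by positivity) (hωnn u hu)

lemma summable_weight_mul_two_pow_mul_pow (hωnn : ∀ t ∈ Ioc (0 : ℝ) 1, 0 ≤ ω t)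
    (hωmono : MonotoneOn ω (Ioc 0 1)) (h0 : 0 ≤ r) (h1 : r < 1) :
    Summable fun k : ℕ => ω (2⁻¹ ^ k) * 2 ^ k * r ^ 2 ^ k := by
  refine Summable.of_nonneg_of_le (fun k => ?_)
    (fun k => weight_mul_two_pow_mul_pow_le hωnn hωmono h0 h1 ⟨one_pos, le_rfl⟩
      (two_inv_pow_mem_Ioc k).2)
    ((summable_geometric_of_lt_one (by norm_num) (by norm_num)).mul_left _)
  have := hωnn _ (two_inv_pow_mem_Ioc k)
  positivity

lemma sum_range_weight_mul_two_pow_mul_pow_le (hωnn : ∀ t ∈ Ioc (0 : ℝ) 1, 0 ≤ ω t) {ε : ℝ}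
    (hε : 0 < ε) (hanti : AntitoneOn (fun t : ℝ => ω t / t ^ ((1 : ℝ) - ε)) (Ioc 0 1))
    (h0 : 0 ≤ r) (h1 : r < 1) {N : ℕ} (hN : 2 ^ N * (1 - r) ≤ 1) :
    ∑ k ∈ Finset.range (N + 1), ω (2⁻¹ ^ k) * 2 ^ k * r ^ 2 ^ k ≤
      2 ^ ε / (2 ^ ε - 1) * (ω (1 - r) / (1 - r)) := by
  set s := 1 - r
  have hs : s ∈ Ioc (0 : ℝ) 1 := ⟨by linarith, by linarith⟩
  have hterm : ∀ k ∈ Finset.range (N + 1),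
      ω (2⁻¹ ^ k) * 2 ^ k * r ^ 2 ^ k ≤ ω s / s * ((2 : ℝ) ^ k * s) ^ ε := by
    intro k hk
    have hks : s ≤ 2⁻¹ ^ k := by
      have hkN : k ≤ N := Nat.lt_succ_iff.1 (Finset.mem_range.1 hk)
      rw [inv_pow, ← one_div, le_div_iff₀ (by positivity), mul_comm]
      exact le_trans (by gcongr; norm_num) hN
    calc ω (2⁻¹ ^ k) * 2 ^ k * r ^ 2 ^ k ≤ ω (2⁻¹ ^ k) * 2 ^ k :=
          mul_le_of_le_one_right (mul_nonneg (hωnn _ (two_inv_pow_mem_Ioc k)) (by positivity))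
            (pow_le_one₀ h0 h1.le)
      _ = ω (2⁻¹ ^ k) / 2⁻¹ ^ k := by rw [div_eq_mul_inv (ω _), inv_pow, inv_inv]
      _ ≤ ω s / s * (s / 2⁻¹ ^ k) ^ ε :=
          div_le_div_mul_div_rpow_of_antitoneOn hanti hs (two_inv_pow_mem_Ioc k) hks
      _ = ω s / s * ((2 : ℝ) ^ k * s) ^ ε := by rw [inv_pow, div_inv_eq_mul, mul_comm s]
  calc _ ≤ ∑ k ∈ Finset.range (N + 1), ω s / s * ((2 : ℝ) ^ k * s) ^ ε :=
        Finset.sum_le_sum hterm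
    _ = ω s / s * ∑ k ∈ Finset.range (N + 1), ((2 : ℝ) ^ k * s) ^ ε := (Finset.mul_sum ..).symm
    _ ≤ ω s / s * (2 ^ ε / (2 ^ ε - 1)) := by
        have := hωnn s hs
        gcongr
        exact sum_range_two_pow_mul_rpow_le hε hs.1.le hN
    _ = _ := mul_comm ..

lemma tsum_weight_mul_two_pow_mul_pow_tail_le (hωnn : ∀ t ∈ Ioc (0 : ℝ) 1, 0 ≤ ω t)
    (hωmono : MonotoneOn ω (Ioc 0 1)) (h0 : 0 ≤ r) (h1 : r < 1) {M : ℕ}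
    (hM : 1 < 2 ^ M * (1 - r)) :
    ∑' i, ω (2⁻¹ ^ (i + M)) * 2 ^ (i + M) * r ^ 2 ^ (i + M) ≤ 4 * (ω (1 - r) / (1 - r)) := by
  set s := 1 - r
  have hs : s ∈ Ioc (0 : ℝ) 1 := ⟨by linarith, by linarith⟩
  have hMs : (2 : ℝ)⁻¹ ^ M < s := by
    rwa [inv_pow, ← one_div, div_lt_iff₀ (by positivity), mul_comm]
  have hterm : ∀ i : ℕ, ω (2⁻¹ ^ (i + M)) * 2 ^ (i + M) * r ^ 2 ^ (i + M) ≤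
      ω s * (2 / s ^ 2) * 2⁻¹ ^ M * 2⁻¹ ^ i := fun i => by
    rw [mul_assoc _ (2⁻¹ ^ M), ← pow_add, add_comm M i]
    refine weight_mul_two_pow_mul_pow_le hωnn hωmono h0 h1 hs (le_trans ?_ hMs.le)
    exact pow_le_pow_of_le_one (by norm_num) (by norm_num) (Nat.le_add_left M i)
  have hgeo : Summable fun i : ℕ => ω s * (2 / s ^ 2) * 2⁻¹ ^ M * (2 : ℝ)⁻¹ ^ i :=
    (summable_geometric_of_lt_one (by norm_num) (by norm_num)).mul_left _
  have hωs := hωnn s hs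
  calc _ ≤ ∑' i : ℕ, ω s * (2 / s ^ 2) * 2⁻¹ ^ M * (2 : ℝ)⁻¹ ^ i := by
        refine Summable.tsum_le_tsum hterm (Summable.of_nonneg_of_le (fun i => ?_) hterm hgeo) hgeo
        have := hωnn _ (two_inv_pow_mem_Ioc (i + M))
        positivity
    _ = ω s * (2 / s ^ 2) * 2⁻¹ ^ M * 2 := by rw [tsum_mul_left, tsum_geometric_inv_two]
    _ ≤ ω s * (2 / s ^ 2) * s * 2 := by gcongr
    _ = 4 * (ω s / s) := by field_simp; ring

theorem tsum_weight_mul_two_pow_mul_pow_le (hωnn : ∀ t ∈ Ioc (0 : ℝ) 1, 0 ≤ ω t)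
    (hωmono : MonotoneOn ω (Ioc 0 1)) {ε : ℝ} (hε : 0 < ε)
    (hanti : AntitoneOn (fun t : ℝ => ω t / t ^ ((1 : ℝ) - ε)) (Ioc 0 1))
    (h0 : 0 ≤ r) (h1 : r < 1) :
    ∑' k : ℕ, ω (2⁻¹ ^ k) * 2 ^ k * r ^ 2 ^ k ≤
      (2 ^ ε / (2 ^ ε - 1) + 4) * (ω (1 - r) / (1 - r)) := by
  have hs : 0 < 1 - r := by linarith
  obtain ⟨N, hN, hN'⟩ := exists_nat_pow_near (one_le_inv₀ hs |>.2 (by linarith)) one_lt_two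
  rw [← (summable_weight_mul_two_pow_mul_pow hωnn hωmono h0 h1).sum_add_tsum_nat_add (N + 1),
    add_mul]
  exact add_le_add
    (sum_range_weight_mul_two_pow_mul_pow_le hωnn hε hanti h0 h1
      ((le_div_iff₀ hs).1 (by rwa [one_div])))
    (tsum_weight_mul_two_pow_mul_pow_tail_le hωnn hωmono h0 h1
      ((div_lt_iff₀ hs).1 (by rwa [one_div])))

end WeightedGapSum

theorem stmt17_general (d : ℕ) (ω : ℝ → ℝ)
    (hωpos : ∀ t ∈ Set.Ioc (0 : ℝ) 1, 0 < ω t)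
    (hωmono : MonotoneOn ω (Set.Ioc (0 : ℝ) 1))
    (hωreg : ∃ ε : ℝ, 0 < ε ∧
      AntitoneOn (fun t : ℝ => ω t / t ^ ((1 : ℝ) - ε)) (Set.Ioc (0 : ℝ) 1)) :
    ∃ C : ℝ, 0 < C ∧
      ∀ (P : ℕ → EuclideanSpace ℂ (Fin d) → ℂ) (η : ℕ → ℂ),
        (∀ k : ℕ, Differentiable ℂ (P k)) →
        (∀ (k : ℕ) (l : ℂ) (z : EuclideanSpace ℂ (Fin d)), P k (l • z) = l ^ (2 ^ k) * P k z) →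
        (∀ k : ℕ, ∀ ζ ∈ sphere (0 : EuclideanSpace ℂ (Fin d)) 1, ‖P k ζ‖ ≤ 1) →
        (∀ k : ℕ, ‖η k‖ ≤ 1) →
        ∀ f : EuclideanSpace ℂ (Fin d) → ℂ,
          (f = fun z => ∑' k : ℕ, η k * (ω ((2 : ℝ)⁻¹ ^ k) : ℂ) * P k z) →
          TendstoLocallyUniformlyOn
            (fun (n : ℕ) z => ∑ k ∈ Finset.range n, η k * (ω ((2 : ℝ)⁻¹ ^ k) : ℂ) * P k z)
            f atTop (ball 0 1) ∧
          DifferentiableOn ℂ f (ball 0 1) ∧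
          ∀ z ∈ ball (0 : EuclideanSpace ℂ (Fin d)) 1,
            ‖f 0‖ + ‖radDeriv f z‖ * (1 - ‖z‖) / ω (1 - ‖z‖) ≤ C := by
  obtain ⟨ε, hε, hanti⟩ := hωreg
  refine ⟨2 ^ ε / (2 ^ ε - 1) + 4,
    by have := sub_pos.2 (Real.one_lt_rpow one_lt_two hε); positivity, ?_⟩
  rintro P η hPd hom hsph hη f rfl
  have hωnn : ∀ t ∈ Ioc (0 : ℝ) 1, 0 ≤ ω t := fun t ht => (hωpos t ht).le
  have hn : ∀ k : ℕ, k ≤ 2 ^ k := fun k => Nat.lt_two_pow_self.le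
  have hPb : ∀ k x, ‖P k x‖ ≤ ‖x‖ ^ 2 ^ k :=
    fun k => norm_apply_le_pow_of_homogeneous (by positivity) (hom k) (hsph k)
  have hcoef : ∀ k : ℕ, ‖η k * (ω (2⁻¹ ^ k) : ℂ)‖ ≤ ω (2⁻¹ ^ k) := fun k => by
    rw [norm_mul, Complex.norm_real, Real.norm_of_nonneg (hωnn _ (two_inv_pow_mem_Ioc k))]
    exact mul_le_of_le_one_left (hωnn _ (two_inv_pow_mem_Ioc k)) (hη k)
  have hc : ∀ k : ℕ, ‖η k * (ω (2⁻¹ ^ k) : ℂ)‖ ≤ ω 1 := fun k =>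
    (hcoef k).trans (hωmono (two_inv_pow_mem_Ioc k) ⟨one_pos, le_rfl⟩ (two_inv_pow_mem_Ioc k).2)
  refine ⟨tendstoLocallyUniformlyOn_sum_range_mul hc hPb hn, fun z hz =>
    (hasFDerivAt_tsum_mul hc hPd hPb hn hz).differentiableAt.differentiableWithinAt,
    fun z hz => ?_⟩
  have hz1 : ‖z‖ < 1 := mem_ball_zero_iff.1 hz
  have hs : 1 - ‖z‖ ∈ Ioc (0 : ℝ) 1 := ⟨by linarith, by linarith [norm_nonneg z]⟩
  have hf0 : ∑' k : ℕ, η k * (ω (2⁻¹ ^ k) : ℂ) * P k 0 = 0 := by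
    simp [apply_zero_of_homogeneous (by positivity) (hom _)]
  have hradDeriv : ‖radDeriv (fun z => ∑' k : ℕ, η k * (ω (2⁻¹ ^ k) : ℂ) * P k z) z‖ ≤
      (2 ^ ε / (2 ^ ε - 1) + 4) * (ω (1 - ‖z‖) / (1 - ‖z‖)) := by
    refine (norm_fderiv_tsum_mul_apply_self_le hc hPd hPb hn hom hcoef hz ?_).trans ?_
    · simpa using summable_weight_mul_two_pow_mul_pow hωnn hωmono (norm_nonneg z) hz1
    · simpa using tsum_weight_mul_two_pow_mul_pow_le hωnn hωmono hε hanti (norm_nonneg z) hz1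
  simp only [hf0, norm_zero, zero_add]
  rw [div_le_iff₀ (hωpos _ hs)]
  exact (mul_le_mul_of_nonneg_right hradDeriv hs.1.le).trans_eq (by field_simp [hs.1.ne'])

/-- uniform `B^ω`-bound for gap series of homogeneous polynomials of degrees
`2^k` with coefficients `η_k ω(2^{-k})`, `|η_k| ≤ 1`. -/
theorem stmt17 (d : ℕ) (hd : 1 ≤ d) (ω : ℝ → ℝ)
    (hωpos : ∀ t ∈ Set.Ioc (0 : ℝ) 1, 0 < ω t)
    (hωmono : MonotoneOn ω (Set.Ioc (0 : ℝ) 1))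
    (hωreg : ∃ ε : ℝ, 0 < ε ∧
      AntitoneOn (fun t : ℝ => ω t / t ^ ((1 : ℝ) - ε)) (Set.Ioc (0 : ℝ) 1)) :
    ∃ C : ℝ, 0 < C ∧
      ∀ (P : ℕ → EuclideanSpace ℂ (Fin d) → ℂ) (η : ℕ → ℂ),
        (∀ k : ℕ, Differentiable ℂ (P k)) →
        (∀ (k : ℕ) (l : ℂ) (z : EuclideanSpace ℂ (Fin d)), P k (l • z) = l ^ (2 ^ k) * P k z) →
        (∀ k : ℕ, ∀ ζ ∈ sphere (0 : EuclideanSpace ℂ (Fin d)) 1, ‖P k ζ‖ ≤ 1) →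
        (∀ k : ℕ, ‖η k‖ ≤ 1) →
        ∀ f : EuclideanSpace ℂ (Fin d) → ℂ,
          (f = fun z => ∑' k : ℕ, η k * (ω ((2 : ℝ)⁻¹ ^ k) : ℂ) * P k z) →
          TendstoLocallyUniformlyOn
            (fun (n : ℕ) z => ∑ k ∈ Finset.range n, η k * (ω ((2 : ℝ)⁻¹ ^ k) : ℂ) * P k z)
            f atTop (ball 0 1) ∧
          DifferentiableOn ℂ f (ball 0 1) ∧
          ∀ z ∈ ball (0 : EuclideanSpace ℂ (Fin d)) 1,
            ‖f 0‖ + ‖radDeriv f z‖ * (1 - ‖z‖) / ω (1 - ‖z‖) ≤ C :=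
  stmt17_general d ω hωpos hωmono hωreg
end
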